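/- arXiv:2301.08934 — 2 statements merged into one kernel-verified Lean document; each statement's English description precedes it below -/
import Mathlib

section
/- For every natural number n, the physicists' Hermite polynomial function H_n satisfies the Hermite differential equation: for all real x, H_n''(x) - 2*x*H_n'(x) + 2*n*H_n(x) = 0. -/
/-!
The Gaussian `g t = exp (-t ^ 2)` solves `g' = -2 t g`. Differentiating this `n + 1` times gives
`g⁽ⁿ⁺²⁾ = -2 x g⁽ⁿ⁺¹⁾ - 2 (n + 1) g⁽ⁿ⁾`, which after multiplying by `(-1) ^ n exp (x ^ 2)` is the
three-term recurrence `H (n + 2) = 2 x H (n + 1) - 2 (n + 1) H n`. The product rule gives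
`H n' = 2 x H n - H (n + 1)`; differentiating once more and eliminating `H (n + 2)` with the
recurrence leaves exactly the Hermite equation.
-/

open Real

/-- Physicists' Hermite polynomial function via the Rodrigues formula. -/
noncomputable def hermiteFun (n : ℕ) (x : ℝ) : ℝ :=
  (-1 : ℝ) ^ n * Real.exp (x ^ 2) * iteratedDeriv n (fun t : ℝ => Real.exp (-t ^ 2)) x

open scoped ContDiff

theorem ContDiff.hasDerivAt_iteratedDeriv {𝕜 F : Type*} [NontriviallyNormedField 𝕜]
    [NormedAddCommGroup F] [NormedSpace 𝕜 F] {f : 𝕜 → F} (hf : ContDiff 𝕜 ∞ f) (n : ℕ) (x : 𝕜) :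
    HasDerivAt (iteratedDeriv n f) (iteratedDeriv (n + 1) f x) x := by
  rw [iteratedDeriv_succ]
  exact (hf.differentiable_iteratedDeriv n (mod_cast ENat.natCast_lt_top n)).differentiableAt
    |>.hasDerivAt

theorem iteratedDeriv_add_two_of_hasDerivAt_eq_neg_two_mul {𝕜 : Type*}
    [NontriviallyNormedField 𝕜] {f : 𝕜 → 𝕜} (hf : ContDiff 𝕜 ∞ f)
    (hf' : ∀ x, HasDerivAt f (-2 * x * f x) x) (n : ℕ) (x : 𝕜) :
    iteratedDeriv (n + 2) f x
      = -2 * x * iteratedDeriv (n + 1) f x - 2 * (n + 1) * iteratedDeriv n f x := by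
  have hD := hf.hasDerivAt_iteratedDeriv
  have hD1 : iteratedDeriv 1 f = fun y => -2 * y * f y := by
    ext y
    rw [iteratedDeriv_one, (hf' y).deriv]
  induction n generalizing x with
  | zero =>
    have h : HasDerivAt (fun y => -2 * y * f y) (-2 * f x + -2 * x * (-2 * x * f x)) x :=
      (((hasDerivAt_id' x).const_mul (-2 : 𝕜)).mul (hf' x)).congr_deriv (by ring)
    rw [← hD1] at h
    rw [(hD 1 x).unique h, hD1, iteratedDeriv_zero]
    ring
  | succ n ih =>
    have h : HasDerivAt
        (fun y => -2 * y * iteratedDeriv (n + 1) f y - 2 * (n + 1) * iteratedDeriv n f y)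
        (-2 * iteratedDeriv (n + 1) f x + -2 * x * iteratedDeriv (n + 2) f x
          - 2 * (n + 1) * iteratedDeriv (n + 1) f x) x :=
      ((((hasDerivAt_id' x).const_mul (-2 : 𝕜)).mul (hD (n + 1) x)).sub
        ((hD n x).const_mul (2 * (n + 1) : 𝕜))).congr_deriv (by ring)
    rw [← funext ih] at h
    rw [(hD (n + 2) x).unique h]
    push_cast
    ring

theorem contDiff_exp_neg_sq : ContDiff ℝ ∞ (fun t : ℝ => exp (-t ^ 2)) := by fun_prop

theorem hasDerivAt_exp_neg_sq (x : ℝ) :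
    HasDerivAt (fun t : ℝ => exp (-t ^ 2)) (-2 * x * exp (-x ^ 2)) x :=
  ((hasDerivAt_pow 2 x).neg.exp).congr_deriv (by simp only [Pi.neg_apply]; ring)

theorem hasDerivAt_hermiteFun (n : ℕ) (x : ℝ) :
    HasDerivAt (hermiteFun n) (2 * x * hermiteFun n x - hermiteFun (n + 1) x) x :=
  ((((hasDerivAt_pow 2 x).exp).const_mul ((-1 : ℝ) ^ n)).mul
    (contDiff_exp_neg_sq.hasDerivAt_iteratedDeriv n x)).congr_deriv
    (by simp only [hermiteFun]; ring)

theorem hermiteFun_add_two (n : ℕ) (x : ℝ) :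
    hermiteFun (n + 2) x = 2 * x * hermiteFun (n + 1) x - 2 * (n + 1) * hermiteFun n x := by
  rw [hermiteFun, iteratedDeriv_add_two_of_hasDerivAt_eq_neg_two_mul contDiff_exp_neg_sq
    hasDerivAt_exp_neg_sq, hermiteFun, hermiteFun]
  ring

/-- The Hermite differential equation: H_n'' - 2 x H_n' + 2 n H_n = 0. -/
theorem hermiteFun_diff_eq (n : ℕ) (x : ℝ) :
    deriv (deriv (hermiteFun n)) x - 2 * x * deriv (hermiteFun n) x
      + 2 * (n : ℝ) * hermiteFun n x = 0 := by
  have hD : deriv (hermiteFun n) = fun y => 2 * y * hermiteFun n y - hermiteFun (n + 1) y :=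
    funext fun y => (hasDerivAt_hermiteFun n y).deriv
  have hD2 : HasDerivAt (fun y => 2 * y * hermiteFun n y - hermiteFun (n + 1) y)
      (2 * hermiteFun n x + 2 * x * (2 * x * hermiteFun n x - hermiteFun (n + 1) x)
        - (2 * x * hermiteFun (n + 1) x - hermiteFun (n + 2) x)) x :=
    ((((hasDerivAt_id' x).const_mul 2).mul (hasDerivAt_hermiteFun n x)).sub
      (hasDerivAt_hermiteFun (n + 1) x)).congr_deriv (by ring)
  rw [hD, hD2.deriv, hermiteFun_add_two]
  ring
end

section
/- Let μ > 0 be a real parameter and n a natural number. Define u_n(x) = (π^(-1/4) / sqrt(2^n * n!)) * exp(-μ*x^2/2) * H_n(sqrt(μ)*x). Then u_n is an eigenfunction of the one-dimensional quantum harmonic oscillator with eigenvalue λ_n(μ) = (n + 1/2)*μ: for all real x, -(1/2)*u_n''(x) + (1/2)*μ^2*x^2*u_n(x) = (n + 1/2)*μ*u_n(x). -/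
open Real

/-- The n-th eigenfunction of the 1D quantum harmonic oscillator with parameter μ. -/
noncomputable def oscEigenfun (n : ℕ) (μ : ℝ) (x : ℝ) : ℝ :=
  (Real.pi ^ (-(1 : ℝ) / 4) / Real.sqrt (2 ^ n * (n.factorial : ℝ))) *
    Real.exp (-μ * x ^ 2 / 2) * hermiteFun n (Real.sqrt μ * x)

/-!
Mathlib's `hermite n` is the probabilists' Hermite polynomial `He_n`, and the Rodrigues formula
gives `H_n(x) = 2^(n/2) He_n(√2 x)`, so `u_n(x)` is a constant multiple of `ψ_n(√(2μ) x)` with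
`ψ_n(y) = He_n(y) e^(-y²/4)`. The recurrence `He_(n+1) = X He_n - He_n'` yields `He_n' = n He_(n-1)`
and hence Hermite's equation `He_n'' = X He_n' - n He_n`, which is exactly
`ψ_n'' = (y²/4 - (n + 1/2)) ψ_n`. Rescaling `y = √(2μ) x` turns this into the oscillator equation.
-/

open Polynomial

namespace Polynomial

theorem derivative_hermite_succ (n : ℕ) :
    derivative (hermite (n + 1)) = (n + 1 : ℤ[X]) * hermite n := by
  induction n with
  | zero => simp [hermite_succ]
  | succ k ih =>
    rw [hermite_succ (k + 1), derivative_sub, derivative_mul, derivative_X, one_mul, ih,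
      derivative_mul, hermite_succ k]
    simp only [derivative_add, derivative_natCast, derivative_one, add_zero, zero_mul, zero_add]
    push_cast
    ring

theorem derivative_derivative_hermite (n : ℕ) :
    derivative (derivative (hermite n)) = X * derivative (hermite n) - (n : ℤ[X]) * hermite n := by
  cases n with
  | zero => simp
  | succ k =>
    rw [derivative_hermite_succ, derivative_mul, hermite_succ]
    simp only [derivative_add, derivative_natCast, derivative_one, add_zero, zero_mul, zero_add]
    push_cast
    ring

end Polynomial

noncomputable def polyMulGaussian (p : ℝ[X]) (y : ℝ) : ℝ :=
  p.eval y * exp (-(y ^ 2 / 4))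

theorem hasDerivAt_polyMulGaussian (p : ℝ[X]) (y : ℝ) :
    HasDerivAt (polyMulGaussian p)
      (polyMulGaussian (derivative p - C (1 / 2) * X * p) y) y := by
  have hexponent : HasDerivAt (fun t : ℝ => -(t ^ 2 / 4)) (-(y / 2)) y := by
    refine ((hasDerivAt_pow 2 y).div_const 4).neg.congr_deriv ?_
    ring
  unfold polyMulGaussian
  refine ((p.hasDerivAt y).mul hexponent.exp).congr_deriv ?_
  simp only [eval_sub, eval_mul, eval_C, eval_X]
  ring

theorem deriv_polyMulGaussian (p : ℝ[X]) :
    deriv (polyMulGaussian p) = polyMulGaussian (derivative p - C (1 / 2) * X * p) :=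
  funext fun y => (hasDerivAt_polyMulGaussian p y).deriv

theorem deriv_deriv_polyMulGaussian_hermite (n : ℕ) (y : ℝ) :
    deriv (deriv (polyMulGaussian ((hermite n).map (algebraMap ℤ ℝ)))) y
      = (y ^ 2 / 4 - (n + 1 / 2)) * polyMulGaussian ((hermite n).map (algebraMap ℤ ℝ)) y := by
  set He := (hermite n).map (algebraMap ℤ ℝ)
  have hode : derivative (derivative He) = X * derivative He - C (n : ℝ) * He := by
    simpa [He, derivative_map] using
      congrArg (map (algebraMap ℤ ℝ)) (derivative_derivative_hermite n)
  have hsecond : derivative (derivative He - C (1 / 2) * X * He)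
        - C (1 / 2) * X * (derivative He - C (1 / 2) * X * He)
      = (C (1 / 4) * X ^ 2 - C ((n : ℝ) + 1 / 2)) * He := by
    simp only [derivative_sub, derivative_mul, derivative_C, derivative_X, hode]
    have hhalf : (C (1 / 2) : ℝ[X]) * 2 = 1 := by rw [← C_ofNat, ← C_mul]; norm_num
    rw [C_add, show (C (1 / 4) : ℝ[X]) = C (1 / 2) ^ 2 by rw [← C_pow]; norm_num]
    linear_combination (-X * derivative He) * hhalf
  rw [deriv_polyMulGaussian, deriv_polyMulGaussian, hsecond]
  simp only [polyMulGaussian, eval_mul, eval_sub, eval_C, eval_pow, eval_X]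
  ring

theorem deriv_deriv_comp_mul_left {𝕜 : Type*} [NontriviallyNormedField 𝕜] (c : 𝕜) (f : 𝕜 → 𝕜)
    (x : 𝕜) :
    deriv (deriv fun x => f (c * x)) x = c ^ 2 * deriv (deriv f) (c * x) := by
  have h1 : deriv (fun x => f (c * x)) = fun x => c * deriv f (c * x) :=
    funext fun x => deriv_comp_mul_left c f x
  rw [h1, deriv_const_mul_field']
  beta_reduce
  rw [deriv_comp_mul_left c (deriv f) x, smul_eq_mul, sq, mul_assoc]

theorem hermiteFun_eq_sqrt_two_pow_mul_eval (n : ℕ) (x : ℝ) :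
    hermiteFun n x = √2 ^ n * ((hermite n).map (algebraMap ℤ ℝ)).eval (√2 * x) := by
  have hsq : ∀ t : ℝ, (√2 * t) ^ 2 / 2 = t ^ 2 := fun t => by
    rw [mul_pow, Real.sq_sqrt zero_le_two]; ring
  have hgauss : (fun t : ℝ => exp (-t ^ 2)) = fun t => exp (-((√2 * t) ^ 2 / 2)) := by
    simp only [hsq]
  have hsmooth : ContDiff ℝ n fun y : ℝ => exp (-(y ^ 2 / 2)) := by fun_prop
  rw [hermiteFun, hgauss, iteratedDeriv_comp_const_mul hsmooth]
  beta_reduce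
  rw [iteratedDeriv_eq_iterate, deriv_gaussian_eq_hermite_mul_gaussian, eval_map_algebraMap, hsq]
  have hsign : (-1 : ℝ) ^ n * (-1) ^ n = 1 := by rw [← mul_pow]; norm_num
  have hexp : exp (x ^ 2) * exp (-x ^ 2) = 1 := by rw [← exp_add]; simp
  linear_combination (√2 ^ n * aeval (√2 * x) (hermite n)) *
    (exp (x ^ 2) * exp (-x ^ 2) * hsign + hexp)

theorem oscEigenfun_eq_polyMulGaussian {μ : ℝ} (hμ : 0 ≤ μ) (n : ℕ) :
    oscEigenfun n μ = fun x => π ^ (-(1 : ℝ) / 4) / √(2 ^ n * (n.factorial : ℝ)) * √2 ^ n *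
      polyMulGaussian ((hermite n).map (algebraMap ℤ ℝ)) (√2 * √μ * x) := by
  funext x
  have hexponent : -((√2 * √μ * x) ^ 2 / 4) = -μ * x ^ 2 / 2 := by
    rw [mul_pow, mul_pow, sq_sqrt zero_le_two, sq_sqrt hμ]; ring
  rw [oscEigenfun, hermiteFun_eq_sqrt_two_pow_mul_eval, polyMulGaussian, hexponent, mul_assoc √2]
  ring

/-- u_n is an eigenfunction of the 1D harmonic oscillator with eigenvalue (n + 1/2) μ. -/
theorem oscEigenfun_eigen (μ : ℝ) (hμ : 0 < μ) (n : ℕ) (x : ℝ) :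
    -(1 / 2) * deriv (deriv (oscEigenfun n μ)) x
      + (1 / 2) * μ ^ 2 * x ^ 2 * oscEigenfun n μ x
      = ((n : ℝ) + 1 / 2) * μ * oscEigenfun n μ x := by
  set c := √2 * √μ
  have hc : c ^ 2 = 2 * μ := by rw [mul_pow, sq_sqrt zero_le_two, sq_sqrt hμ.le]
  rw [oscEigenfun_eq_polyMulGaussian hμ.le]
  simp only [deriv_const_mul_field']
  rw [deriv_deriv_comp_mul_left, deriv_deriv_polyMulGaussian_hermite]
  set A := π ^ (-(1 : ℝ) / 4) / √(2 ^ n * (n.factorial : ℝ)) * √2 ^ n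
  set ψ := polyMulGaussian ((hermite n).map (algebraMap ℤ ℝ)) (c * x)
  linear_combination (-(1 / 2) * A * ψ * ((c ^ 2 + 2 * μ) * x ^ 2 / 4 - (n + 1 / 2))) * hc
end
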